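/- Let k ≥ 1 and n ≥ 1 with n < 2k. Then the complex vector space of matrices f : (Fin k → Fin n) × (Fin k → Fin n) → ℂ satisfying f(σ ∘ I, σ ∘ J) = f(I, J) for all σ ∈ S_n has dimension Bell(2k, n), which is strictly less than Bell(2k); in particular the difference Bell(2k) − Bell(2k, n) is positive. -/

import Mathlib

/-!
An `S_n`-invariant matrix is a function on the orbits of pairs `(I, J)`. Concatenating `I` and `J`
into one tuple `Fin (2k) → Fin n`, two tuples lie in the same orbit exactly when they have the same
kernel, and the kernels of such tuples are exactly the partitions of `Fin (2k)` into at most `n`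
blocks; so the invariant matrices are the functions of that partition, and there are `Bell(2k, n)`
of them. The partition of `Fin (2k)` into singletons has `2k > n` blocks, whence the inequality.
-/

noncomputable section

/-- `Bell m n`: the number of set partitions of `Fin m` (encoded as setoids,
i.e. equivalence relations) into at most `n` blocks. -/
def Bell (m n : ℕ) : ℕ :=
  Nat.card {π : Setoid (Fin m) // Nat.card (Quotient π) ≤ n}

def BellAll (m : ℕ) : ℕ := Nat.card (Setoid (Fin m))

/-- The space `End_{S_n}(M_n^{⊗k})` in the standard basis: matrices
`f : (Fin k → Fin n) × (Fin k → Fin n) → ℂ` with `f (σ ∘ I, σ ∘ J) = f (I, J)`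
for all `σ ∈ S_n`. -/
def MEnd (n k : ℕ) : Submodule ℂ ((Fin k → Fin n) × (Fin k → Fin n) → ℂ) where
  carrier := {f | ∀ (σ : Equiv.Perm (Fin n)) (I J : Fin k → Fin n),
    f (⇑σ ∘ I, ⇑σ ∘ J) = f (I, J)}
  add_mem' := by
    intro a b ha hb σ I J
    simp only [Pi.add_apply, ha σ I J, hb σ I J]
  zero_mem' := by intro σ I J; rfl
  smul_mem' := by
    intro c a ha σ I J
    simp only [Pi.smul_apply, ha σ I J]

open Function

namespace Setoid

variable {α β : Type*}

instance instFinite [Finite α] : Finite (Setoid α) :=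
  Finite.of_injective _ fun _ _ h ↦ Setoid.ext fun a b ↦ iff_of_eq (congrFun₂ h a b)

theorem ker_perm_comp (σ : Equiv.Perm β) (f : α → β) : ker (σ ∘ f) = ker f :=
  Setoid.ext fun _ _ ↦ σ.injective.eq_iff

theorem exists_perm_comp_eq_of_ker_eq [Finite β] {f g : α → β} (h : ker f = ker g) :
    ∃ σ : Equiv.Perm β, σ ∘ f = g := by
  classical
  let e : Set.range f ≃ Set.range g := (quotientKerEquivRange f).symm.trans <|
    (Quotient.congrRight (Setoid.ext_iff.1 h)).trans (quotientKerEquivRange g)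
  refine ⟨e.extendSubtype, funext fun a ↦ ?_⟩
  have hsymm : (quotientKerEquivRange f).symm ⟨f a, a, rfl⟩ = ⟦a⟧ :=
    (Equiv.symm_apply_eq _).2 rfl
  rw [comp_apply, e.extendSubtype_apply_of_mem _ ⟨a, rfl⟩, Equiv.trans_apply, hsymm]
  rfl

theorem card_quotient_ker_le [Finite β] (f : α → β) : Nat.card (Quotient (ker f)) ≤ Nat.card β :=
  (Nat.card_congr (quotientKerEquivRange f)).trans_le (Finite.card_subtype_le _)

def boundedKer [Finite β] (f : α → β) : {π : Setoid α // Nat.card (Quotient π) ≤ Nat.card β} :=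
  ⟨ker f, card_quotient_ker_le f⟩

theorem boundedKer_surjective [Finite α] [Finite β] :
    Surjective (boundedKer : (α → β) → {π : Setoid α // Nat.card (Quotient π) ≤ Nat.card β}) := by
  rintro ⟨π, hπ⟩
  have := Fintype.ofFinite (Quotient π)
  have := Fintype.ofFinite β
  rw [Nat.card_eq_fintype_card, Nat.card_eq_fintype_card] at hπ
  obtain ⟨e⟩ := Function.Embedding.nonempty_of_card_le hπ
  refine ⟨e ∘ Quotient.mk'', Subtype.ext ?_⟩
  calc ker (e ∘ Quotient.mk'') = ker (Quotient.mk'' : α → Quotient π) :=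
        Setoid.ext fun _ _ ↦ e.injective.eq_iff
    _ = π := ker_mk_eq π

end Setoid

theorem Fin.appendEquiv_comp {α β : Type*} {m n : ℕ} (g : α → β) (u : Fin m → α)
    (v : Fin n → α) : Fin.appendEquiv m n (g ∘ u, g ∘ v) = g ∘ Fin.appendEquiv m n (u, v) :=
  funext fun i ↦ Fin.addCases (fun i ↦ by simp) (fun i ↦ by simp) i

namespace LinearMap

variable {R M X Y : Type*} [Semiring R] [AddCommMonoid M] [Module R M]

theorem mem_range_funLeft_iff {θ : X → Y} {f : X → M} :
    f ∈ range (funLeft R M θ) ↔ f.FactorsThrough θ :=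
  ⟨by rintro ⟨g, rfl⟩ a b h; exact congrArg g h,
    fun hf ↦ ⟨extend θ f 0, funext (hf.extend_apply 0)⟩⟩

theorem finrank_range_funLeft [StrongRankCondition R] [Finite Y] {θ : X → Y}
    (hθ : Surjective θ) : Module.finrank R (range (funLeft R R θ)) = Nat.card Y := by
  have := Fintype.ofFinite Y
  rw [← (LinearEquiv.ofInjective _ (funLeft_injective_of_surjective R R θ hθ)).finrank_eq,
    Module.finrank_fintype_fun_eq_card, Nat.card_eq_fintype_card]

end LinearMap

theorem mem_MEnd_iff_factorsThrough {n k : ℕ} (f : (Fin k → Fin n) × (Fin k → Fin n) → ℂ) :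
    f ∈ MEnd n k ↔ f.FactorsThrough (Setoid.boundedKer ∘ Fin.appendEquiv k k) := by
  constructor
  · rintro hf ⟨I, J⟩ q hq
    obtain ⟨σ, hσ⟩ := Setoid.exists_perm_comp_eq_of_ker_eq (congrArg Subtype.val hq)
    obtain rfl : q = (σ ∘ I, σ ∘ J) := (Fin.appendEquiv k k).injective <| by
      rw [Fin.appendEquiv_comp]
      exact hσ.symm
    exact (hf σ I J).symm
  · intro hf σ I J
    apply hf
    change Setoid.boundedKer _ = Setoid.boundedKer _
    rw [Fin.appendEquiv_comp]
    exact Subtype.ext (Setoid.ker_perm_comp σ _)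

theorem finrank_MEnd (n k : ℕ) : Module.finrank ℂ (MEnd n k) = Bell (2 * k) n := by
  have hrange : MEnd n k = LinearMap.range (LinearMap.funLeft ℂ ℂ
      (Setoid.boundedKer ∘ Fin.appendEquiv k k)) :=
    SetLike.ext fun f ↦ (mem_MEnd_iff_factorsThrough f).trans LinearMap.mem_range_funLeft_iff.symm
  rw [hrange, LinearMap.finrank_range_funLeft
    (Setoid.boundedKer_surjective.comp (Fin.appendEquiv k k).surjective), Nat.card_fin, Bell, two_mul]

theorem bell_lt_bellAll {m n : ℕ} (h : n < m) : Bell m n < BellAll m :=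
  Finite.card_subtype_lt (x := ⊥) <| by
    rw [Nat.card_congr Setoid.quotientBotEquiv, Nat.card_fin]
    omega

theorem finrank_MEnd_lt_bellAll_general (k n : ℕ) (h : n < 2 * k) :
    Module.finrank ℂ ↥(MEnd n k) = Bell (2 * k) n ∧
    Bell (2 * k) n < BellAll (2 * k) ∧
    0 < BellAll (2 * k) - Bell (2 * k) n := by
  have hlt : Bell (2 * k) n < BellAll (2 * k) := bell_lt_bellAll h
  exact ⟨finrank_MEnd n k, hlt, Nat.sub_pos_of_lt hlt⟩

/-- if `k ≥ 1` and `n < 2k` then `dim End_{S_n}(M_n^{⊗k}) = Bell(2k, n)`,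
which is strictly smaller than `Bell(2k)`; in particular `Bell(2k) - Bell(2k, n) > 0`. -/
theorem finrank_MEnd_lt_bellAll (k n : ℕ) (hk : 1 ≤ k) (hn : 1 ≤ n) (h : n < 2 * k) :
    Module.finrank ℂ ↥(MEnd n k) = Bell (2 * k) n ∧
    Bell (2 * k) n < BellAll (2 * k) ∧
    0 < BellAll (2 * k) - Bell (2 * k) n :=
  finrank_MEnd_lt_bellAll_general k n h

end
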